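/- The number of elements g ∈ G_n with π₀(q_n(g)) ≠ 0 and order of g equal to 3 is 2 * 9^n, and the number of elements g ∈ G_n with π₀(q_n(g)) ≠ 0 and order of g equal to 9 is 2 * 3^n * (9^n − 3^n). -/

import Mathlib

/-- The abelian group `A_n = ℤ/3 ⊕ (ℤ/9)^n`. -/
abbrev An (n : ℕ) : Type := ZMod 3 × (Fin n → ZMod 9)

/-- Projection onto the `ℤ/3` factor. -/
def pi0 {n : ℕ} (a : An n) : ZMod 3 := a.1

/-- The reduction map `ℤ/9 → ℤ/3`. -/
def red : ZMod 9 →+* ZMod 3 := ZMod.castHom (show 3 ∣ 9 by norm_num) (ZMod 3)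

/-- The `i`-th `ℤ/9` coordinate reduced mod 3. -/
def pii {n : ℕ} (i : Fin n) (a : An n) : ZMod 3 := red (a.2 i)

/-- The 2-cocycle `θ(σ,τ) i = π₀(σ)·π_i(τ)`. -/
def theta {n : ℕ} (σ τ : An n) : Fin n → ZMod 3 := fun i => pi0 σ * pii i τ

/-- The underlying set of the group `G_n`. -/
def Gn (n : ℕ) : Type := (Fin n → ZMod 3) × An n

namespace Gn

variable {n : ℕ}

instance instFintype : Fintype (Gn n) :=
  inferInstanceAs (Fintype ((Fin n → ZMod 3) × An n))

instance instDecEq : DecidableEq (Gn n) :=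
  inferInstanceAs (DecidableEq ((Fin n → ZMod 3) × An n))

lemma theta_add_left (a b c : An n) : theta (a + b) c = theta a c + theta b c := by
  funext i; simp only [theta, pi0, Pi.add_apply, Prod.fst_add]; ring

lemma theta_add_right (a b c : An n) : theta a (b + c) = theta a b + theta a c := by
  funext i
  simp only [theta, pii, pi0, Pi.add_apply, Prod.snd_add, map_add]
  ring

lemma theta_zero_left (a : An n) : theta 0 a = 0 := by
  funext i; simp [theta, pi0]

lemma theta_zero_right (a : An n) : theta a 0 = 0 := by
  funext i; simp [theta, pii]

lemma theta_neg_left (a b : An n) : theta (-a) b = - theta a b := by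
  funext i; simp only [theta, pi0, Prod.fst_neg, Pi.neg_apply]; ring

/-- The group structure on `G_n` given by the cocycle `θ`. -/
instance instGroup : Group (Gn n) where
  mul x y := (x.1 + y.1 + theta x.2 y.2, x.2 + y.2)
  one := (0, 0)
  inv x := (-x.1 + theta x.2 x.2, -x.2)
  mul_assoc x y z := by
    apply Prod.ext
    · show x.1 + y.1 + theta x.2 y.2 + z.1 + theta (x.2 + y.2) z.2
        = x.1 + (y.1 + z.1 + theta y.2 z.2) + theta x.2 (y.2 + z.2)
      rw [theta_add_left, theta_add_right]; abel
    · exact add_assoc _ _ _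
  one_mul x := by
    apply Prod.ext
    · show 0 + x.1 + theta 0 x.2 = x.1
      rw [theta_zero_left]; abel
    · exact zero_add _
  mul_one x := by
    apply Prod.ext
    · show x.1 + 0 + theta x.2 0 = x.1
      rw [theta_zero_right]; abel
    · exact add_zero _
  inv_mul_cancel x := by
    apply Prod.ext
    · show -x.1 + theta x.2 x.2 + x.1 + theta (-x.2) x.2 = 0
      rw [theta_neg_left]; abel
    · exact neg_add_cancel _

/-- The quotient map `q_n : G_n → A_n`, `(c, a) ↦ a`. -/
def qn (x : Gn n) : An n := x.2

lemma qn_mul (x y : Gn n) : qn (x * y) = qn x + qn y := rfl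

/-- `q_n` as a group homomorphism to (the multiplicative version of) `A_n`. -/
def qnHom : Gn n →* Multiplicative (An n) where
  toFun x := Multiplicative.ofAdd (qn x)
  map_one' := rfl
  map_mul' _ _ := rfl

end Gn

section Aux

variable {n : ℕ}

lemma Gn.mul_def (x y : Gn n) : x * y = (x.1 + y.1 + theta x.2 y.2, x.2 + y.2) := rfl

lemma Gn.one_def : (1 : Gn n) = (0, 0) := rfl

lemma Gn.pow_three (g : Gn n) :
    (g ^ 3 : Gn n) = (((0 : Fin n → ZMod 3), ((0 : ZMod 3), fun i => (3 : ZMod 9) * g.2.2 i)) : Gn n) := by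
  rw [show g ^ 3 = g * g * g by rw [pow_succ, pow_two], Gn.mul_def, Gn.mul_def]
  apply Prod.ext
  · funext i
    show g.1 i + g.1 i + theta g.2 g.2 i + g.1 i + theta (g.2 + g.2) g.2 i = 0
    simp only [theta, pi0, pii, Prod.fst_add]
    have h3 : (3 : ZMod 3) = 0 := rfl
    linear_combination (g.1 i + g.2.1 * red (g.2.2 i)) * h3
  · apply Prod.ext
    · show g.2.1 + g.2.1 + g.2.1 = 0
      have h3 : (3 : ZMod 3) = 0 := rfl
      linear_combination g.2.1 * h3
    · funext i
      show g.2.2 i + g.2.2 i + g.2.2 i = 3 * g.2.2 i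
      ring

lemma Gn.pow_nine (g : Gn n) : g ^ 9 = 1 := by
  rw [show (9:ℕ) = 3 * 3 from rfl, pow_mul, Gn.pow_three, Gn.pow_three, Gn.one_def]
  apply Prod.ext
  · rfl
  · apply Prod.ext
    · rfl
    · funext i
      show (3 : ZMod 9) * ((3 : ZMod 9) * g.2.2 i) = 0
      have h9 : (9 : ZMod 9) = 0 := rfl
      linear_combination g.2.2 i * h9

lemma Gn.ne_one (g : Gn n) (hg : pi0 (Gn.qn g) ≠ 0) : g ≠ 1 := by
  intro h
  apply hg
  rw [h]
  rfl

lemma Gn.order_mem (g : Gn n) : orderOf g = 1 ∨ orderOf g = 3 ∨ orderOf g = 9 := by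
  have hd : orderOf g ∣ 9 := orderOf_dvd_of_pow_eq_one (Gn.pow_nine g)
  have h1 : 1 ≤ orderOf g := Nat.one_le_iff_ne_zero.mpr (by
    have : 0 < orderOf g := by
      haveI : Finite (Gn n) := Finite.of_fintype _
      exact orderOf_pos g
    omega)
  have h9 : orderOf g ≤ 9 := Nat.le_of_dvd (by norm_num) hd
  interval_cases h : orderOf g <;> revert hd <;> decide

lemma Gn.orderOf_eq_three_iff (g : Gn n) (hg : pi0 (Gn.qn g) ≠ 0) :
    orderOf g = 3 ↔ g ^ 3 = 1 := by
  constructor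
  · intro h; rw [← h]; exact pow_orderOf_eq_one g
  · intro h
    have hd : orderOf g ∣ 3 := orderOf_dvd_of_pow_eq_one h
    rcases Gn.order_mem g with h1 | h3 | h9
    · exact absurd (orderOf_eq_one_iff.mp h1) (Gn.ne_one g hg)
    · exact h3
    · rw [h9] at hd; norm_num at hd

lemma Gn.orderOf_eq_nine_iff (g : Gn n) (hg : pi0 (Gn.qn g) ≠ 0) :
    orderOf g = 9 ↔ ¬ g ^ 3 = 1 := by
  rcases Gn.order_mem g with h1 | h3 | h9
  · exact absurd (orderOf_eq_one_iff.mp h1) (Gn.ne_one g hg)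
  · constructor
    · intro h; rw [h] at h3; norm_num at h3
    · intro h; exact absurd ((Gn.orderOf_eq_three_iff g hg).mp h3) h
  · constructor
    · intro _ hcube
      have := (Gn.orderOf_eq_three_iff g hg).mpr hcube
      rw [h9] at this; norm_num at this
    · intro _; exact h9

lemma Gn.pow_three_eq_one_iff (g : Gn n) :
    g ^ 3 = 1 ↔ ∀ i, (3 : ZMod 9) * g.2.2 i = 0 := by
  rw [Gn.pow_three, Gn.one_def]; erw [Prod.ext_iff]; rw [Prod.ext_iff]
  constructor
  · intro h i
    have := congrFun h.2.2 i
    exact this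
  · intro h
    exact ⟨rfl, rfl, funext h⟩

/-- Split off the first (cocycle) factor. -/
def Gn.countEquiv (Q : An n → Prop) : {g : Gn n // Q g.2} ≃ (Fin n → ZMod 3) × {a : An n // Q a} where
  toFun g := (g.1.1, ⟨g.1.2, g.2⟩)
  invFun p := ⟨(p.1, p.2.1), p.2.2⟩
  left_inv _ := rfl
  right_inv _ := rfl

end Aux

/-- There are `2·9^n` elements `g ∈ G_n` with `π₀(q_n(g)) ≠ 0` of order
`3`, and `2·3^n·(9^n − 3^n)` such elements of order `9`. -/
theorem stmt_7 (n : ℕ) (hn : 1 ≤ n) :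
    Nat.card {g : Gn n // pi0 (Gn.qn g) ≠ 0 ∧ orderOf g = 3} = 2 * 9 ^ n ∧
    Nat.card {g : Gn n // pi0 (Gn.qn g) ≠ 0 ∧ orderOf g = 9}
      = 2 * 3 ^ n * (9 ^ n - 3 ^ n) := by
  have key : ∀ (P : (Fin n → ZMod 9) → Prop) [DecidablePred P],
      Nat.card {g : Gn n // pi0 (Gn.qn g) ≠ 0 ∧ P g.2.2}
        = 3 ^ n * (2 * Nat.card {v : Fin n → ZMod 9 // P v}) := by
    intro P _
    have e1 : {g : Gn n // pi0 (Gn.qn g) ≠ 0 ∧ P g.2.2}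
        ≃ (Fin n → ZMod 3) × {a : An n // a.1 ≠ 0 ∧ P a.2} :=
      Gn.countEquiv (fun a => a.1 ≠ 0 ∧ P a.2)
    have e2 : {a : An n // a.1 ≠ 0 ∧ P a.2}
        ≃ {s : ZMod 3 // s ≠ 0} × {v : Fin n → ZMod 9 // P v} :=
      Equiv.subtypeProdEquivProd (p := fun s : ZMod 3 => s ≠ 0) (q := P)
    rw [Nat.card_congr (e1.trans (Equiv.prodCongr (Equiv.refl _) e2)), Nat.card_prod,
      Nat.card_prod]
    have c1 : Nat.card (Fin n → ZMod 3) = 3 ^ n := by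
      rw [Nat.card_eq_fintype_card]; simp
    have c2 : Nat.card {s : ZMod 3 // s ≠ 0} = 2 := by
      rw [Nat.card_eq_fintype_card]; decide
    rw [c1, c2]
  have hC : Nat.card {v : Fin n → ZMod 9 // ∀ i, (3 : ZMod 9) * v i = 0} = 3 ^ n := by
    rw [Nat.card_congr (Equiv.subtypePiEquivPi (p := fun _ x => (3 : ZMod 9) * x = 0)),
      Nat.card_eq_fintype_card]
    have : Fintype.card {x : ZMod 9 // (3 : ZMod 9) * x = 0} = 3 := by decide
    simp [this]
  constructor
  · have he : ∀ g : Gn n, (pi0 (Gn.qn g) ≠ 0 ∧ orderOf g = 3)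
        ↔ (pi0 (Gn.qn g) ≠ 0 ∧ ∀ i, (3 : ZMod 9) * g.2.2 i = 0) := by
      intro g
      constructor
      · rintro ⟨h1, h2⟩
        exact ⟨h1, (Gn.pow_three_eq_one_iff g).mp ((Gn.orderOf_eq_three_iff g h1).mp h2)⟩
      · rintro ⟨h1, h2⟩
        exact ⟨h1, (Gn.orderOf_eq_three_iff g h1).mpr ((Gn.pow_three_eq_one_iff g).mpr h2)⟩
    rw [Nat.card_congr (Equiv.subtypeEquivRight he),
      key (fun v => ∀ i, (3 : ZMod 9) * v i = 0), hC,
      show (9:ℕ) = 3 * 3 by norm_num, mul_pow]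
    ring
  · have he : ∀ g : Gn n, (pi0 (Gn.qn g) ≠ 0 ∧ orderOf g = 9)
        ↔ (pi0 (Gn.qn g) ≠ 0 ∧ ¬ ∀ i, (3 : ZMod 9) * g.2.2 i = 0) := by
      intro g
      constructor
      · rintro ⟨h1, h2⟩
        refine ⟨h1, fun h => ?_⟩
        exact (Gn.orderOf_eq_nine_iff g h1).mp h2 ((Gn.pow_three_eq_one_iff g).mpr h)
      · rintro ⟨h1, h2⟩
        refine ⟨h1, (Gn.orderOf_eq_nine_iff g h1).mpr fun h => ?_⟩
        exact h2 ((Gn.pow_three_eq_one_iff g).mp h)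
    rw [Nat.card_congr (Equiv.subtypeEquivRight he),
      key (fun v => ¬ ∀ i, (3 : ZMod 9) * v i = 0)]
    have hcompl : Nat.card {v : Fin n → ZMod 9 // ¬ ∀ i, (3 : ZMod 9) * v i = 0}
        = 9 ^ n - 3 ^ n := by
      rw [Nat.card_eq_fintype_card, Fintype.card_subtype_compl, ← Nat.card_eq_fintype_card,
        ← Nat.card_eq_fintype_card, hC]
      congr 1
      rw [Nat.card_eq_fintype_card]; simp
    rw [hcompl]
    ring
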